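/- arXiv:2112.14529 — 2 statements merged into one kernel-verified Lean document; each statement's English description precedes it below -/
import Mathlib

section
/- Define L_M(x) := 105(M+1) / (M(2M⁵ + 12M⁴ + 30M³ + 40M² + 23M − 2)) · |F_M″(x)|². Then {L_M}_{M=1}^{∞} is a family of good kernels on [−π, π]: (i) L_M(x) ≥ 0 for all x; (ii) (1/(2π)) ∫_{-π}^{π} L_M(x) dx = 1 for every M ≥ 1; (iii) for every δ ∈ (0, π), lim_{M→∞} ∫_{δ ≤ |x| ≤ π} L_M(x) dx = 0. -/
open Real Filter MeasureTheory intervalIntegral Finset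
open scoped Topology BigOperators

lemma cosInt (n : ℤ) : ∫ x in (-π)..π, Real.cos (n * x) = if n = 0 then 2*π else 0 := by
  rcases eq_or_ne n 0 with h | h
  · simp [h, two_mul]
  · have hn : (n:ℝ) ≠ 0 := Int.cast_ne_zero.mpr h
    rw [if_neg h]
    have := intervalIntegral.integral_comp_mul_left (a := -π) (b := π) (fun x => Real.cos x) hn
    rw [this, integral_cos,
      show (n:ℝ) * π = ((n:ℤ):ℝ) * π from rfl,
      show (n:ℝ) * -π = ((-n:ℤ):ℝ) * π by push_cast; ring,
      Real.sin_int_mul_pi, Real.sin_int_mul_pi]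
    simp

lemma orth (j k : ℤ) (hj : 1 ≤ j) (hk : 1 ≤ k) :
    ∫ x in (-π)..π, Real.cos (j * x) * Real.cos (k * x) = if j = k then π else 0 := by
  have key : ∀ x : ℝ, Real.cos (j * x) * Real.cos (k * x)
      = (Real.cos (((j+k : ℤ)) * x) + Real.cos (((j-k : ℤ)) * x)) / 2 := by
    intro x
    push_cast
    rw [show ((j:ℝ)+k)*x = j*x + k*x by ring, show ((j:ℝ)-k)*x = j*x - k*x by ring,
      Real.cos_add, Real.cos_sub]
    ring
  simp_rw [key]
  have i1 : IntervalIntegrable (fun x => Real.cos (((j+k:ℤ)) * x)) volume (-π) π :=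
    (Real.continuous_cos.comp (continuous_const.mul continuous_id)).intervalIntegrable _ _
  have i2 : IntervalIntegrable (fun x => Real.cos (((j-k:ℤ)) * x)) volume (-π) π :=
    (Real.continuous_cos.comp (continuous_const.mul continuous_id)).intervalIntegrable _ _
  rw [intervalIntegral.integral_div, integral_add i1 i2, cosInt, cosInt]
  have hjk : j + k ≠ 0 := by omega
  rcases eq_or_ne j k with h | h
  · have hk0 : k ≠ 0 := by omega
    simp [h, hjk, hk0]
  · simp [hjk, sub_eq_zero, h]

lemma Icc_int_succ (n : ℕ) : Finset.Icc (1:ℤ) ((n:ℤ)+1) = insert ((n:ℤ)+1) (Finset.Icc (1:ℤ) n) := by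
  ext k; simp only [Finset.mem_Icc, Finset.mem_insert]; omega

lemma sum_Icc_int_succ (n : ℕ) (f : ℤ → ℝ) :
    ∑ k ∈ Icc (1:ℤ) ((n:ℤ)+1), f k = (∑ k ∈ Icc (1:ℤ) (n:ℤ), f k) + f ((n:ℤ)+1) := by
  rw [Icc_int_succ, Finset.sum_insert (by simp), add_comm]

lemma S4 (M : ℕ) : ∑ k ∈ Icc (1:ℤ) M, ((k:ℝ))^4
    = M*(M+1)*(2*M+1)*(3*(M:ℝ)^2+3*M-1)/30 := by
  induction M with
  | zero => simp
  | succ n ih =>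
    rw [show ((n+1:ℕ):ℤ) = (n:ℤ)+1 by push_cast; ring,
      sum_Icc_int_succ, ih]
    push_cast; ring

lemma S5 (M : ℕ) : ∑ k ∈ Icc (1:ℤ) M, ((k:ℝ))^5
    = (M:ℝ)^2*(M+1)^2*(2*(M:ℝ)^2+2*M-1)/12 := by
  induction M with
  | zero => simp
  | succ n ih =>
    rw [show ((n+1:ℕ):ℤ) = (n:ℤ)+1 by push_cast; ring,
      sum_Icc_int_succ, ih]
    push_cast; ring

lemma S6 (M : ℕ) : ∑ k ∈ Icc (1:ℤ) M, ((k:ℝ))^6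
    = M*(M+1)*(2*M+1)*(3*(M:ℝ)^4+6*(M:ℝ)^3-3*M+1)/42 := by
  induction M with
  | zero => simp
  | succ n ih =>
    rw [show ((n+1:ℕ):ℤ) = (n:ℤ)+1 by push_cast; ring,
      sum_Icc_int_succ, ih]
    push_cast; ring

lemma sumT (M : ℕ) : ∑ k ∈ Icc (1:ℤ) M, (k:ℝ)^4*(((M:ℝ)+1)-k)^2
    = M*((M:ℝ)+1)*(2*(M:ℝ)^5+12*(M:ℝ)^4+30*(M:ℝ)^3+40*(M:ℝ)^2+23*M-2)/210 := by
  have expand : ∀ k ∈ Icc (1:ℤ) (M:ℤ), (k:ℝ)^4*(((M:ℝ)+1)-k)^2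
      = ((M:ℝ)+1)^2*(k:ℝ)^4 - 2*((M:ℝ)+1)*(k:ℝ)^5 + (k:ℝ)^6 := by
    intro k _; ring
  rw [Finset.sum_congr rfl expand]
  simp only [Finset.sum_add_distrib, Finset.sum_sub_distrib, ← Finset.mul_sum]
  rw [S4, S5, S6]; ring

lemma sum_Icc_neg (M : ℕ) (f : ℤ → ℝ) (hf : ∀ k, f (-k) = f k) :
    ∑ k ∈ Icc (-(M:ℤ)) M, f k = f 0 + 2 * ∑ k ∈ Icc (1:ℤ) M, f k := by
  induction M with
  | zero => simp
  | succ n ih =>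
    have h1 : Finset.Icc (-((n+1:ℕ):ℤ)) ((n+1:ℕ):ℤ)
        = insert (-((n:ℤ)+1)) (insert ((n:ℤ)+1) (Finset.Icc (-(n:ℤ)) (n:ℤ))) := by
      ext k; simp only [Finset.mem_Icc, Finset.mem_insert]; omega
    rw [h1, Finset.sum_insert (by simp only [Finset.mem_insert, Finset.mem_Icc]; omega),
      Finset.sum_insert (by simp only [Finset.mem_Icc]; omega), ih,
      show ((n+1:ℕ):ℤ) = (n:ℤ)+1 by push_cast; ring, sum_Icc_int_succ, hf ((n:ℤ)+1)]
    ring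

noncomputable def fejer' (M : ℕ) (x : ℝ) : ℝ :=
  ∑ k ∈ Finset.Icc (-(M : ℤ)) (M : ℤ),
    (1 - |(k : ℝ)| / ((M : ℝ) + 1)) * (-(k : ℝ) * Real.sin (k * x))

noncomputable def fejer'' (M : ℕ) (x : ℝ) : ℝ :=
  ∑ k ∈ Finset.Icc (-(M : ℤ)) (M : ℤ),
    (1 - |(k : ℝ)| / ((M : ℝ) + 1)) * (-(k : ℝ) ^ 2 * Real.cos (k * x))

/-- The Fejér kernel of order `M`. -/
noncomputable def fejer (M : ℕ) (x : ℝ) : ℝ :=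
  ∑ k ∈ Finset.Icc (-(M : ℤ)) (M : ℤ), (1 - |(k : ℝ)| / ((M : ℝ) + 1)) * Real.cos (k * x)

/-- `L_M(x) := 105(M+1) / (M(2M⁵ + 12M⁴ + 30M³ + 40M² + 23M − 2)) · |F_M″(x)|²`. -/
noncomputable def Lker (M : ℕ) (x : ℝ) : ℝ :=
  105 * ((M : ℝ) + 1) / ((M : ℝ) * (2 * (M : ℝ) ^ 5 + 12 * (M : ℝ) ^ 4 + 30 * (M : ℝ) ^ 3
      + 40 * (M : ℝ) ^ 2 + 23 * M - 2))
    * |deriv (deriv (fejer M)) x| ^ 2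

lemma hasDerivAt_fejer (M : ℕ) (x : ℝ) : HasDerivAt (fejer M) (fejer' M x) x := by
  apply HasDerivAt.fun_sum
  intro k _
  have h1 : HasDerivAt (fun y : ℝ => (k:ℝ) * y) (k:ℝ) x := by simpa using (hasDerivAt_id x).const_mul ((k:ℝ))
  have h2 := (Real.hasDerivAt_cos ((k:ℝ) * x)).comp x h1
  refine (h2.const_mul (1 - |(k : ℝ)| / ((M : ℝ) + 1))).congr_deriv ?_
  ring

lemma hasDerivAt_fejer' (M : ℕ) (x : ℝ) : HasDerivAt (fejer' M) (fejer'' M x) x := by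
  apply HasDerivAt.fun_sum
  intro k _
  have h1 : HasDerivAt (fun y : ℝ => (k:ℝ) * y) (k:ℝ) x := by simpa using (hasDerivAt_id x).const_mul ((k:ℝ))
  have h2 := (Real.hasDerivAt_sin ((k:ℝ) * x)).comp x h1
  refine ((h2.const_mul (-(k:ℝ))).const_mul (1 - |(k : ℝ)| / ((M : ℝ) + 1))).congr_deriv ?_
  ring

lemma deriv2_fejer (M : ℕ) : deriv (deriv (fejer M)) = fejer'' M := by
  have h1 : deriv (fejer M) = fejer' M := funext fun x => (hasDerivAt_fejer M x).deriv
  rw [h1]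
  exact funext fun x => (hasDerivAt_fejer' M x).deriv

lemma continuous_fejer'' (M : ℕ) : Continuous (fejer'' M) := by
  apply continuous_finset_sum
  intro k _
  exact continuous_const.mul (continuous_const.mul
    (Real.continuous_cos.comp (continuous_const.mul continuous_id)))

lemma fejer''_even_rw (M : ℕ) (x : ℝ) :
    fejer'' M x = 2 * ∑ k ∈ Icc (1:ℤ) M,
      ((1 - |(k : ℝ)| / ((M : ℝ) + 1)) * (-(k : ℝ) ^ 2 * Real.cos (k * x))) := by
  have := sum_Icc_neg M
    (fun k => (1 - |(k : ℝ)| / ((M : ℝ) + 1)) * (-(k : ℝ) ^ 2 * Real.cos (k * x)))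
    (by intro k; push_cast; rw [abs_neg, show (-(k:ℝ)) * x = -((k:ℝ)*x) by ring, Real.cos_neg]; ring)
  rw [fejer'', this]
  norm_num

lemma integral_fejer''_sq (M : ℕ) :
    ∫ x in (-π)..π, (fejer'' M x)^2
      = 4*π*(∑ k ∈ Icc (1:ℤ) M, ((k:ℝ)^4*(((M:ℝ)+1)-k)^2))/((M:ℝ)+1)^2 := by
  set I := Finset.Icc (1:ℤ) (M:ℤ) with hI
  set b : ℤ → ℝ := fun k => (1 - |(k : ℝ)| / ((M : ℝ) + 1)) * (-(k : ℝ) ^ 2) with hb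
  have hrw : ∀ x : ℝ, (fejer'' M x)^2
      = ∑ j ∈ I, ∑ k ∈ I, (4 * b j * b k) * (Real.cos (j * x) * Real.cos (k * x)) := by
    intro x
    rw [fejer''_even_rw]
    have : ∀ k ∈ I, (1 - |(k : ℝ)| / ((M : ℝ) + 1)) * (-(k : ℝ) ^ 2 * Real.cos (k * x))
        = b k * Real.cos (k * x) := by intro k _; simp only [hb]; ring
    rw [Finset.sum_congr rfl this]
    rw [show (2 * ∑ k ∈ I, b k * Real.cos (k * x))^2
      = 4 * ((∑ j ∈ I, b j * Real.cos (j * x)) * (∑ k ∈ I, b k * Real.cos (k * x))) by ring]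
    rw [Finset.sum_mul_sum, Finset.mul_sum]
    apply Finset.sum_congr rfl; intro j _
    rw [Finset.mul_sum]
    apply Finset.sum_congr rfl; intro k _
    ring
  simp_rw [hrw]
  rw [intervalIntegral.integral_finset_sum]
  swap
  · intro j _
    apply Continuous.intervalIntegrable
    apply continuous_finset_sum
    intro k _
    exact continuous_const.mul ((Real.continuous_cos.comp (continuous_const.mul
      continuous_id)).mul (Real.continuous_cos.comp (continuous_const.mul continuous_id)))
  have inner : ∀ j ∈ I, (∫ x in (-π)..π,
        ∑ k ∈ I, (4 * b j * b k) * (Real.cos (j * x) * Real.cos (k * x)))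
      = 4 * π * b j ^ 2 := by
    intro j hj
    rw [intervalIntegral.integral_finset_sum]
    swap
    · intro k _
      exact (continuous_const.mul ((Real.continuous_cos.comp (continuous_const.mul
        continuous_id)).mul (Real.continuous_cos.comp (continuous_const.mul
        continuous_id)))).intervalIntegrable _ _
    have hj1 : 1 ≤ j := (Finset.mem_Icc.mp hj).1
    have : ∀ k ∈ I, (∫ x in (-π)..π, (4 * b j * b k) * (Real.cos (j * x) * Real.cos (k * x)))
        = if j = k then 4 * π * b j ^ 2 else 0 := by
      intro k hk
      have hk1 : 1 ≤ k := (Finset.mem_Icc.mp hk).1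
      rw [intervalIntegral.integral_const_mul, orth j k hj1 hk1]
      rcases eq_or_ne j k with h | h
      · subst h; simp; ring
      · simp [h]
    rw [Finset.sum_congr rfl this, Finset.sum_ite_eq I j (fun _ => 4 * π * b j ^ 2), if_pos hj]
  rw [Finset.sum_congr rfl inner]
  have hbsq : ∀ j ∈ I, 4 * π * b j ^ 2
      = (4 * π / ((M:ℝ)+1)^2) * ((j:ℝ)^4*(((M:ℝ)+1)-j)^2) := by
    intro j hj
    have hj1 : (1:ℤ) ≤ j := (Finset.mem_Icc.mp hj).1
    have habs : |(j:ℝ)| = (j:ℝ) := abs_of_nonneg (by exact_mod_cast hj1.trans' (by norm_num))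
    have hM1 : ((M:ℝ)+1) ≠ 0 := by positivity
    simp only [hb, habs]
    field_simp
  rw [Finset.sum_congr rfl hbsq, ← Finset.mul_sum]
  ring

lemma cos_prod (a b : ℝ) :
    Real.cos a * Real.cos b = (Real.cos (a+b) + Real.cos (a-b))/2 := by
  rw [Real.cos_add, Real.cos_sub]; ring

lemma dirichlet (N : ℕ) (x : ℝ) :
    (1 - Real.cos x) * ∑ k ∈ Icc (-(N:ℤ)) N, Real.cos (k*x)
      = Real.cos ((N:ℝ)*x) - Real.cos (((N:ℝ)+1)*x) := by
  induction N with
  | zero => norm_num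
  | succ n ih =>
    have h1 : Finset.Icc (-((n+1:ℕ):ℤ)) ((n+1:ℕ):ℤ)
        = insert (-((n:ℤ)+1)) (insert ((n:ℤ)+1) (Finset.Icc (-(n:ℤ)) (n:ℤ))) := by
      ext k; simp only [Finset.mem_Icc, Finset.mem_insert]; omega
    rw [h1, Finset.sum_insert (by simp only [Finset.mem_insert, Finset.mem_Icc]; omega),
      Finset.sum_insert (by simp only [Finset.mem_Icc]; omega)]
    have e2 : ((((n:ℤ)+1):ℤ) : ℝ) = (n:ℝ)+1 := by push_cast; ring
    have e1 : ((-(((n:ℤ)+1)):ℤ) : ℝ) * x = -(((n:ℝ)+1) * x) := by push_cast; ring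
    rw [e1, Real.cos_neg, e2]
    have hc := cos_prod x (((n:ℝ)+1)*x)
    rw [show x + ((n:ℝ)+1)*x = ((n:ℝ)+1+1)*x by ring,
      show x - ((n:ℝ)+1)*x = -((n:ℝ)*x) by ring, Real.cos_neg] at hc
    push_cast
    linear_combination ih - 2 * hc

lemma fejer_unnorm (M : ℕ) (x : ℝ) : ((M:ℝ)+1) * fejer M x
    = ∑ k ∈ Icc (-(M:ℤ)) M, ((((M:ℝ)+1) - |(k:ℝ)|) * Real.cos (k*x)) := by
  rw [fejer, Finset.mul_sum]
  apply Finset.sum_congr rfl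
  intro k _
  have hM1 : ((M:ℝ)+1) ≠ 0 := by positivity
  field_simp

lemma fejer_closed (M : ℕ) (x : ℝ) :
    ((M:ℝ)+1) * (1 - Real.cos x) * fejer M x = 1 - Real.cos (((M:ℝ)+1) * x) := by
  induction M with
  | zero =>
    simp only [fejer]
    norm_num
  | succ n ih =>
    have key : ((n:ℝ)+1+1) * fejer (n+1) x
        = ((n:ℝ)+1) * fejer n x + ∑ k ∈ Icc (-((n+1:ℕ):ℤ)) ((n+1:ℕ):ℤ), Real.cos (k*x) := by
      rw [show ((n:ℝ)+1+1) = (((n+1:ℕ):ℝ)+1) by push_cast; ring, fejer_unnorm, fejer_unnorm]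
      have h1 : Finset.Icc (-((n+1:ℕ):ℤ)) ((n+1:ℕ):ℤ)
          = insert (-((n:ℤ)+1)) (insert ((n:ℤ)+1) (Finset.Icc (-(n:ℤ)) (n:ℤ))) := by
        ext k; simp only [Finset.mem_Icc, Finset.mem_insert]; omega
      have split : ∀ k ∈ Finset.Icc (-((n+1:ℕ):ℤ)) ((n+1:ℕ):ℤ),
          ((((n+1:ℕ):ℝ)+1) - |(k:ℝ)|) * Real.cos (k*x)
          = (((n:ℝ)+1) - |(k:ℝ)|) * Real.cos (k*x) + Real.cos (k*x) := by
        intro k _; push_cast; ring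
      rw [Finset.sum_congr rfl split, Finset.sum_add_distrib]
      congr 1
      rw [h1, Finset.sum_insert (by simp only [Finset.mem_insert, Finset.mem_Icc]; omega),
        Finset.sum_insert (by simp only [Finset.mem_Icc]; omega)]
      have z1 : (((n:ℝ)+1) - |((-((n:ℤ)+1):ℤ):ℝ)|) = 0 := by
        push_cast
        rw [abs_neg, abs_of_nonneg (by positivity)]
        ring
      have z2 : (((n:ℝ)+1) - |((((n:ℤ)+1):ℤ):ℝ)|) = 0 := by
        push_cast
        rw [abs_of_nonneg (by positivity)]
        ring
      rw [z1, z2]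
      ring
    have hd := dirichlet (n+1) x
    push_cast at hd key ⊢
    linear_combination (1 - Real.cos x) * key + ih + hd

noncomputable def u1f (y : ℝ) : ℝ := -Real.sin y / (1 - Real.cos y)^2

noncomputable def u2f (y : ℝ) : ℝ :=
  (-Real.cos y * (1 - Real.cos y)^2 + Real.sin y * (2*(1 - Real.cos y)*Real.sin y))
    / ((1 - Real.cos y)^2)^2

noncomputable def gFun (M : ℕ) (y : ℝ) : ℝ :=
  (1 - Real.cos (((M:ℝ)+1)*y)) * (1 - Real.cos y)⁻¹ / ((M:ℝ)+1)

noncomputable def g1f (M : ℕ) (y : ℝ) : ℝ :=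
  (((M:ℝ)+1)*Real.sin (((M:ℝ)+1)*y) * (1 - Real.cos y)⁻¹
    + (1 - Real.cos (((M:ℝ)+1)*y)) * u1f y) / ((M:ℝ)+1)

noncomputable def g2f (M : ℕ) (y : ℝ) : ℝ :=
  (((M:ℝ)+1)^2*Real.cos (((M:ℝ)+1)*y) * (1 - Real.cos y)⁻¹
    + 2*(((M:ℝ)+1)*Real.sin (((M:ℝ)+1)*y)) * u1f y
    + (1 - Real.cos (((M:ℝ)+1)*y)) * u2f y) / ((M:ℝ)+1)

section derivs

variable {y : ℝ} (hy : Real.cos y ≠ 1)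

lemma hd_ne (hy : Real.cos y ≠ 1) : 1 - Real.cos y ≠ 0 := sub_ne_zero.mpr (Ne.symm hy)

lemma hasDerivAt_v (N : ℝ) (y : ℝ) :
    HasDerivAt (fun z => 1 - Real.cos (N*z)) (N * Real.sin (N*y)) y := by
  have h1 : HasDerivAt (fun z : ℝ => N*z) N y := by
    simpa using (hasDerivAt_id y).const_mul N
  have := ((Real.hasDerivAt_cos (N*y)).comp y h1).const_sub 1
  refine this.congr_deriv ?_
  ring

lemma hasDerivAt_u (hy : Real.cos y ≠ 1) :
    HasDerivAt (fun z => (1 - Real.cos z)⁻¹) (u1f y) y := by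
  have := ((Real.hasDerivAt_cos y).const_sub 1).inv (hd_ne hy)
  refine this.congr_deriv ?_
  unfold u1f
  ring

lemma hasDerivAt_u1 (hy : Real.cos y ≠ 1) : HasDerivAt u1f (u2f y) y := by
  have hnum : HasDerivAt (fun z => -Real.sin z) (-Real.cos y) y :=
    (Real.hasDerivAt_sin y).neg
  have hden : HasDerivAt (fun z => (1 - Real.cos z)^2)
      (2*(1 - Real.cos y)*Real.sin y) y := by
    have := ((Real.hasDerivAt_cos y).const_sub 1).pow 2
    refine this.congr_deriv ?_
    ring
  have := hnum.div hden (pow_ne_zero 2 (hd_ne hy))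
  refine this.congr_deriv ?_
  unfold u2f
  ring

lemma hasDerivAt_gFun (M : ℕ) (hy : Real.cos y ≠ 1) :
    HasDerivAt (gFun M) (g1f M y) y := by
  exact ((hasDerivAt_v ((M:ℝ)+1) y).mul (hasDerivAt_u hy)).div_const (((M:ℝ)+1))

lemma hasDerivAt_g1f (M : ℕ) (hy : Real.cos y ≠ 1) :
    HasDerivAt (g1f M) (g2f M y) y := by
  have h1 : HasDerivAt (fun z : ℝ => ((M:ℝ)+1)*z) (((M:ℝ)+1)) y := by
    simpa using (hasDerivAt_id y).const_mul (((M:ℝ)+1))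
  have hw : HasDerivAt (fun z => ((M:ℝ)+1)*Real.sin (((M:ℝ)+1)*z))
      (((M:ℝ)+1)^2 * Real.cos (((M:ℝ)+1)*y)) y := by
    have := ((Real.hasDerivAt_sin (((M:ℝ)+1)*y)).comp y h1).const_mul (((M:ℝ)+1))
    refine this.congr_deriv ?_
    ring
  have := ((hw.mul (hasDerivAt_u hy)).add
    ((hasDerivAt_v (((M:ℝ)+1)) y).mul (hasDerivAt_u1 hy))).div_const (((M:ℝ)+1))
  refine this.congr_deriv ?_
  unfold g2f u1f
  ring

end derivs

lemma fejer_eq_gFun (M : ℕ) {z : ℝ} (hz : Real.cos z ≠ 1) : fejer M z = gFun M z := by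
  have h := fejer_closed M z
  have h1 : 1 - Real.cos z ≠ 0 := hd_ne hz
  have h2 : ((M:ℝ)+1) ≠ 0 := by positivity
  unfold gFun
  field_simp
  linear_combination h

lemma isOpen_U : IsOpen {y : ℝ | Real.cos y ≠ 1} :=
  isOpen_compl_iff.mpr (isClosed_eq Real.continuous_cos continuous_const)

lemma fejer''_eq_g2f (M : ℕ) {z : ℝ} (hz : Real.cos z ≠ 1) : fejer'' M z = g2f M z := by
  have h1 : ∀ w : ℝ, Real.cos w ≠ 1 → fejer' M w = g1f M w := by
    intro w hw
    have heq : fejer M =ᶠ[𝓝 w] gFun M := by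
      filter_upwards [isOpen_U.mem_nhds hw] with z hz using fejer_eq_gFun M hz
    exact (hasDerivAt_fejer M w).unique ((hasDerivAt_gFun M hw).congr_of_eventuallyEq heq)
  have heq1 : fejer' M =ᶠ[𝓝 z] g1f M := by
    filter_upwards [isOpen_U.mem_nhds hz] with w hw using h1 w hw
  exact (hasDerivAt_fejer' M z).unique ((hasDerivAt_g1f M hz).congr_of_eventuallyEq heq1)

lemma mulb {a b A B : ℝ} (ha : |a| ≤ A) (hb : |b| ≤ B) : |a*b| ≤ A*B := by
  rw [abs_mul]
  exact mul_le_mul ha hb (abs_nonneg _) ((abs_nonneg a).trans ha)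

set_option maxHeartbeats 1000000 in
lemma fejer''_bound (M : ℕ) (ε : ℝ) (hε : 0 < ε) {y : ℝ} (hy : ε ≤ 1 - Real.cos y) :
    |fejer'' M y| ≤ ((M:ℝ)+1) * (1/ε + 4/ε^2 + 4/ε^3) := by
  have hd : 0 < 1 - Real.cos y := lt_of_lt_of_le hε hy
  have hz : Real.cos y ≠ 1 := by intro h; rw [h] at hd; simp at hd
  rw [fejer''_eq_g2f M hz]
  set N : ℝ := (M:ℝ)+1 with hN
  have hN1 : 1 ≤ N := by rw [hN]; simp
  have hN0 : 0 < N := lt_of_lt_of_le one_pos hN1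
  set d : ℝ := 1 - Real.cos y with hdd
  clear_value N d
  have hsin : |Real.sin y| ≤ 1 := Real.abs_sin_le_one y
  have hcos : |Real.cos y| ≤ 1 := Real.abs_cos_le_one y
  have hsinN : |Real.sin (N*y)| ≤ 1 := Real.abs_sin_le_one _
  have hcosN : |Real.cos (N*y)| ≤ 1 := Real.abs_cos_le_one _
  have hu : |d⁻¹| ≤ 1/ε := by
    rw [abs_of_pos (inv_pos.mpr hd), one_div]
    exact inv_anti₀ hε hy
  have hu1 : |u1f y| ≤ 1/ε^2 := by
    rw [u1f, abs_div, abs_neg, ← hdd]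
    apply div_le_div₀ one_pos.le hsin (by positivity)
    rw [abs_of_pos (by positivity : (0:ℝ) < d^2)]
    exact pow_le_pow_left₀ hε.le hy 2
  have hu2 : |u2f y| ≤ 1/ε^2 + 2/ε^3 := by
    rw [u2f, abs_div, ← hdd]
    have hnum : |(-Real.cos y * d^2 + Real.sin y * (2*d*Real.sin y))| ≤ d^2 + 2*d := by
      calc |(-Real.cos y * d^2 + Real.sin y * (2*d*Real.sin y))|
          ≤ |(-Real.cos y * d^2)| + |Real.sin y * (2*d*Real.sin y)| := abs_add_le _ _
        _ ≤ d^2 + 2*d := by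
            rw [abs_mul, abs_neg, abs_mul, abs_mul, abs_mul, abs_of_pos hd,
              abs_of_pos (by positivity : (0:ℝ) < d^2), abs_two]
            nlinarith [mul_nonneg (sub_nonneg.mpr hcos) (sq_nonneg d),
              mul_le_mul_of_nonneg_left
                (mul_le_one₀ hsin (abs_nonneg _) hsin : |Real.sin y| * |Real.sin y| ≤ 1)
                (by linarith : (0:ℝ) ≤ 2*d)]
    have hden : |((d^2)^2)| = d^4 := by rw [abs_of_pos (by positivity)]; ring
    rw [hden]
    calc |(-Real.cos y * d^2 + Real.sin y * (2*d*Real.sin y))| / d^4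
        ≤ (d^2 + 2*d) / d^4 := by gcongr
      _ = 1/d^2 + 2/d^3 := by field_simp
      _ ≤ 1/ε^2 + 2/ε^3 := by gcongr
  have hA : |N^2*Real.cos (N*y)*d⁻¹| ≤ N^2*1*(1/ε) := by
    apply mulb _ hu
    apply mulb _ hcosN
    rw [abs_of_pos (by positivity : (0:ℝ) < N^2)]
  have hB : |2*(N*Real.sin (N*y)) * u1f y| ≤ 2*(N*1)*(1/ε^2) := by
    apply mulb _ hu1
    rw [show |2*(N*Real.sin (N*y))| = 2*(N*|Real.sin (N*y)|) by
      rw [abs_mul, abs_mul, abs_two, abs_of_pos hN0]]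
    gcongr
  have hC : |(1 - Real.cos (N*y)) * u2f y| ≤ 2*(1/ε^2 + 2/ε^3) := by
    apply mulb _ hu2
    rw [abs_le]
    constructor <;> nlinarith [Real.neg_one_le_cos (N*y), Real.cos_le_one (N*y)]
  have tri : |N^2*Real.cos (N*y)*d⁻¹ + 2*(N*Real.sin (N*y)) * u1f y
      + (1 - Real.cos (N*y)) * u2f y|
      ≤ N^2*(1/ε) + 2*N*(1/ε^2) + 2*(1/ε^2 + 2/ε^3) := by
    have t1 := abs_add_le (N^2*Real.cos (N*y)*d⁻¹ + 2*(N*Real.sin (N*y)) * u1f y)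
      ((1 - Real.cos (N*y)) * u2f y)
    have t2 := abs_add_le (N^2*Real.cos (N*y)*d⁻¹) (2*(N*Real.sin (N*y)) * u1f y)
    nlinarith [hA, hB, hC]
  rw [g2f, ← hN, ← hdd, abs_div, abs_of_pos hN0, div_le_iff₀ hN0]
  have e2 : (0:ℝ) < 1/ε^2 := by positivity
  have e3 : (0:ℝ) < 1/ε^3 := by positivity
  have q1 : (0:ℝ) ≤ 4*N^2-2*N-2 := by nlinarith
  have q2 : (0:ℝ) ≤ 4*N^2-4 := by nlinarith
  calc |N^2*Real.cos (N*y)*d⁻¹ + 2*(N*Real.sin (N*y)) * u1f y + (1 - Real.cos (N*y)) * u2f y|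
      ≤ N^2*(1/ε) + 2*N*(1/ε^2) + 2*(1/ε^2 + 2/ε^3) := tri
    _ ≤ N^2*(1/ε) + 4*N^2*(1/ε^2) + 4*N^2*(1/ε^3) := by
        rw [← sub_nonneg, show N^2*(1/ε) + 4*N^2*(1/ε^2) + 4*N^2*(1/ε^3)
            - (N^2*(1/ε) + 2*N*(1/ε^2) + 2*(1/ε^2 + 2/ε^3))
            = (4*N^2-2*N-2)/ε^2 + (4*N^2-4)/ε^3 by ring]
        exact add_nonneg (div_nonneg q1 (pow_pos hε 2).le) (div_nonneg q2 (pow_pos hε 3).le)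
    _ = N * (1/ε + 4/ε^2 + 4/ε^3) * N := by ring

lemma Ppos (M : ℕ) (hM : 0 < M) : 0 < (M:ℝ) * (2*(M:ℝ)^5+12*(M:ℝ)^4+30*(M:ℝ)^3
    +40*(M:ℝ)^2+23*(M:ℝ)-2) := by
  have h1 : (1:ℝ) ≤ (M:ℝ) := by exact_mod_cast hM
  have h0 : (0:ℝ) ≤ (M:ℝ) := by linarith
  have hp : 0 < 2*(M:ℝ)^5+12*(M:ℝ)^4+30*(M:ℝ)^3+40*(M:ℝ)^2+23*(M:ℝ)-2 := by
    nlinarith [pow_nonneg h0 5, pow_nonneg h0 4, pow_nonneg h0 3, sq_nonneg (M:ℝ)]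
  exact mul_pos (by linarith) hp

lemma Lker_nonneg (M : ℕ) (x : ℝ) : 0 ≤ Lker M x := by
  rcases Nat.eq_zero_or_pos M with h | h
  · subst h; norm_num [Lker]
  · exact mul_nonneg (div_nonneg (by positivity) (Ppos M h).le) (by positivity)

/-- `{L_M}` is a family of good kernels on `[−π, π]`. -/
theorem Lker_good_kernels :
    (∀ M : ℕ, 0 < M → ∀ x : ℝ, 0 ≤ Lker M x) ∧
    (∀ M : ℕ, 0 < M → (1 / (2 * π)) * ∫ x in (-π)..π, Lker M x = 1) ∧
    (∀ δ : ℝ, 0 < δ → δ < π →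
      Tendsto (fun M : ℕ => ∫ x in {x : ℝ | δ ≤ |x| ∧ |x| ≤ π}, Lker M x)
        atTop (𝓝 0)) := by
  refine ⟨fun M _ x => Lker_nonneg M x, ?_, ?_⟩
  · -- part (ii)
    intro M hM
    have hL : ∀ x : ℝ, Lker M x = 105 * ((M : ℝ) + 1) / ((M : ℝ) * (2 * (M : ℝ) ^ 5
        + 12 * (M : ℝ) ^ 4 + 30 * (M : ℝ) ^ 3 + 40 * (M : ℝ) ^ 2 + 23 * M - 2))
        * (fejer'' M x)^2 := by
      intro x; rw [Lker, deriv2_fejer, sq_abs]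
    simp_rw [hL]
    rw [intervalIntegral.integral_const_mul, integral_fejer''_sq, sumT]
    have hπ := Real.pi_ne_zero
    have hMP := (Ppos M hM).ne'
    have hM1 : ((M:ℝ)+1) ≠ 0 := by positivity
    have hM0 : (M:ℝ) ≠ 0 := by
      exact_mod_cast Nat.pos_iff_ne_zero.mp hM
    have hP : (2 * (M : ℝ) ^ 5 + 12 * (M : ℝ) ^ 4 + 30 * (M : ℝ) ^ 3
        + 40 * (M : ℝ) ^ 2 + 23 * M - 2) ≠ 0 := fun h => hMP (by rw [h, mul_zero])
    field_simp
    rw [div_eq_iff (by convert hP using 1; ring)]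
    ring
  · -- part (iii)
    intro δ hδ0 hδπ
    have hπ := Real.pi_pos
    have hcδ : Real.cos δ ≠ 1 := by
      intro h
      have := (Real.cos_eq_one_iff_of_lt_of_lt (by linarith : -(2*π) < δ)
        (by linarith : δ < 2*π)).mp h
      exact hδ0.ne' this
    set ε : ℝ := 1 - Real.cos δ with hε
    have hεpos : 0 < ε := sub_pos.mpr (lt_of_le_of_ne (Real.cos_le_one δ) hcδ)
    set K : ℝ := 1/ε + 4/ε^2 + 4/ε^3 with hK
    have hKpos : 0 < K := by positivity
    set S : Set ℝ := {x : ℝ | δ ≤ |x| ∧ |x| ≤ π} with hS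
    have hSm : MeasurableSet S := by
      have h : S = {x : ℝ | δ ≤ |x|} ∩ {x : ℝ | |x| ≤ π} := rfl
      rw [h]
      exact (measurableSet_le measurable_const measurable_abs).inter
        (measurableSet_le measurable_abs measurable_const)
    have hSsub : S ⊆ Set.Icc (-π) π := fun x hx => abs_le.mp hx.2
    have hSfin : volume S < ⊤ := lt_of_le_of_lt (measure_mono hSsub) measure_Icc_lt_top
    have hbound : ∀ M : ℕ, 0 < M → ∀ x ∈ S, ‖Lker M x‖ ≤ 420*K^2/(M:ℝ) := by
      intro M hM x hx
      have hMR : (1:ℝ) ≤ (M:ℝ) := by exact_mod_cast hM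
      have hcosx : ε ≤ 1 - Real.cos x := by
        have h2 : Real.cos |x| ≤ Real.cos δ :=
          Real.cos_le_cos_of_nonneg_of_le_pi hδ0.le hx.2 hx.1
        rw [Real.cos_abs] at h2
        rw [hε]; linarith
      have hf := fejer''_bound M ε hεpos hcosx
      rw [← hK] at hf
      have hcoef : (0:ℝ) ≤ 105 * ((M : ℝ) + 1) / ((M : ℝ) * (2 * (M : ℝ) ^ 5
          + 12 * (M : ℝ) ^ 4 + 30 * (M : ℝ) ^ 3 + 40 * (M : ℝ) ^ 2 + 23 * M - 2)) :=
        div_nonneg (by positivity) (Ppos M hM).le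
      rw [Real.norm_eq_abs, abs_of_nonneg (Lker_nonneg M x), Lker, deriv2_fejer]
      calc 105 * ((M : ℝ) + 1) / ((M : ℝ) * (2 * (M : ℝ) ^ 5 + 12 * (M : ℝ) ^ 4
            + 30 * (M : ℝ) ^ 3 + 40 * (M : ℝ) ^ 2 + 23 * M - 2)) * |fejer'' M x| ^ 2
          ≤ 105 * ((M : ℝ) + 1) / ((M : ℝ) * (2 * (M : ℝ) ^ 5 + 12 * (M : ℝ) ^ 4
            + 30 * (M : ℝ) ^ 3 + 40 * (M : ℝ) ^ 2 + 23 * M - 2)) * ((((M:ℝ)+1) * K) ^ 2) :=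
            mul_le_mul_of_nonneg_left (pow_le_pow_left₀ (abs_nonneg _) hf 2) hcoef
        _ ≤ 420*K^2/(M:ℝ) := by
            rw [mul_pow, show 105 * ((M : ℝ) + 1) / ((M : ℝ) * (2 * (M : ℝ) ^ 5
              + 12 * (M : ℝ) ^ 4 + 30 * (M : ℝ) ^ 3 + 40 * (M : ℝ) ^ 2 + 23 * M - 2))
              * (((M:ℝ)+1)^2 * K^2) = (105 * ((M : ℝ) + 1) * ((M:ℝ)+1)^2) / ((M : ℝ)
              * (2 * (M : ℝ) ^ 5 + 12 * (M : ℝ) ^ 4 + 30 * (M : ℝ) ^ 3 + 40 * (M : ℝ) ^ 2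
              + 23 * M - 2)) * K^2 by ring, show 420*K^2/(M:ℝ) = 420/(M:ℝ) * K^2 by ring]
            apply mul_le_mul_of_nonneg_right _ (by positivity)
            rw [div_le_div_iff₀ (Ppos M hM) (by linarith : (0:ℝ) < (M:ℝ))]
            nlinarith [hMR, sq_nonneg ((M:ℝ)-1), pow_pos (lt_of_lt_of_le one_pos hMR) 3]
    apply squeeze_zero' (g := fun M : ℕ => (420*K^2*(volume S).toReal)/(M:ℝ))
    · exact Eventually.of_forall fun M => setIntegral_nonneg hSm fun x _ => Lker_nonneg M x
    · filter_upwards [eventually_gt_atTop 0] with M hM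
      have h1 := norm_setIntegral_le_of_norm_le_const hSfin (hbound M hM)
      calc ∫ x in S, Lker M x ≤ ‖∫ x in S, Lker M x‖ := le_abs_self _
        _ ≤ 420*K^2/(M:ℝ) * (volume S).toReal := h1
        _ = (420*K^2*(volume S).toReal)/(M:ℝ) := by ring
    · exact tendsto_const_div_atTop_nhds_zero_nat _
end

section
/- Let a > 0 and let (M_n) be a sequence of positive integers with M_n²/n → a as n → ∞. Then lim_{n→∞} (1/M_n³) · (2π/n) ∑_{j=0}^{n−1} |F_{M_n}′(2πj/n)|² = (2/15)π. -/
open Real Filter MeasureTheory intervalIntegral Finset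
open scoped Topology BigOperators

/- power sums over `Icc 1 m` in ℤ -/
private lemma Icc_succ_insert (m : ℕ) :
    Finset.Icc (1:ℤ) ((m+1 : ℕ) : ℤ) = insert ((m+1 : ℕ) : ℤ) (Finset.Icc (1:ℤ) (m:ℤ)) := by
  ext x; simp only [Finset.mem_Icc, Finset.mem_insert]; omega

private lemma P2 (m : ℕ) : ∑ k ∈ Finset.Icc (1:ℤ) (m:ℤ), (k:ℝ)^2
    = (m:ℝ)*((m:ℝ)+1)*(2*(m:ℝ)+1)/6 := by
  induction m with
  | zero => simp
  | succ m ih =>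
    rw [Icc_succ_insert, Finset.sum_insert (by simp), ih]
    push_cast; ring

private lemma P3 (m : ℕ) : ∑ k ∈ Finset.Icc (1:ℤ) (m:ℤ), (k:ℝ)^3
    = (m:ℝ)^2*((m:ℝ)+1)^2/4 := by
  induction m with
  | zero => simp
  | succ m ih =>
    rw [Icc_succ_insert, Finset.sum_insert (by simp), ih]
    push_cast; ring

private lemma P4 (m : ℕ) : ∑ k ∈ Finset.Icc (1:ℤ) (m:ℤ), (k:ℝ)^4
    = (m:ℝ)*((m:ℝ)+1)*(2*(m:ℝ)+1)*(3*(m:ℝ)^2+3*(m:ℝ)-1)/30 := by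
  induction m with
  | zero => simp
  | succ m ih =>
    rw [Icc_succ_insert, Finset.sum_insert (by simp), ih]
    push_cast; ring

private lemma sum_Icc_even (m : ℕ) (g : ℤ → ℝ) (hg : ∀ k, g (-k) = g k) :
    ∑ k ∈ Finset.Icc (-(m:ℤ)) (m:ℤ), g k
      = g 0 + 2 * ∑ k ∈ Finset.Icc (1:ℤ) (m:ℤ), g k := by
  induction m with
  | zero => simp
  | succ m ih =>
    have h1 : Finset.Icc (-((m+1:ℕ):ℤ)) ((m+1:ℕ):ℤ)
        = insert (-((m+1:ℕ):ℤ)) (insert ((m+1:ℕ):ℤ) (Finset.Icc (-(m:ℤ)) (m:ℤ))) := by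
      ext x; simp only [Finset.mem_Icc, Finset.mem_insert]; omega
    rw [h1, Finset.sum_insert (by simp only [Finset.mem_insert, Finset.mem_Icc]; omega),
      Finset.sum_insert (by simp only [Finset.mem_Icc]; omega), ih,
      Icc_succ_insert, Finset.sum_insert (by simp only [Finset.mem_Icc]; omega), hg]
    ring

/-- Closed form for the weighted sum of squares. -/
private lemma S_eval (m : ℕ) :
    ∑ k ∈ Finset.Icc (-(m:ℤ)) (m:ℤ), (k:ℝ)^2 * (1 - |(k:ℝ)| / ((m:ℝ)+1))^2
      = ((m:ℝ)+1)^3/15 - 1/(15*((m:ℝ)+1)) := by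
  have hN : ((m:ℝ)+1) ≠ 0 := by positivity
  rw [sum_Icc_even m _ (by intro k; push_cast; rw [abs_neg]; ring)]
  have hterm : ∀ k ∈ Finset.Icc (1:ℤ) (m:ℤ),
      (k:ℝ)^2 * (1 - |(k:ℝ)| / ((m:ℝ)+1))^2
        = (k:ℝ)^2 - 2/((m:ℝ)+1) * (k:ℝ)^3 + (1/((m:ℝ)+1))^2 * (k:ℝ)^4 := by
    intro k hk
    simp only [Finset.mem_Icc] at hk
    have : |(k:ℝ)| = (k:ℝ) := by
      rw [abs_of_nonneg]; exact_mod_cast (by omega : (0:ℤ) ≤ k)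
    rw [this]; field_simp; ring
  rw [Finset.sum_congr rfl hterm]
  simp only [Finset.sum_add_distrib, Finset.sum_sub_distrib, ← Finset.mul_sum]
  rw [P2, P3, P4]
  field_simp
  ring

/-- Derivative of the Fejér kernel. -/
private lemma fejer_hasDerivAt (M : ℕ) (x : ℝ) :
    HasDerivAt (fejer M)
      (∑ k ∈ Finset.Icc (-(M:ℤ)) (M:ℤ),
        (-((1 - |(k:ℝ)| / ((M:ℝ)+1)) * (k:ℝ))) * Real.sin ((k:ℝ)*x)) x := by
  have h : ∀ k ∈ Finset.Icc (-(M:ℤ)) (M:ℤ),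
      HasDerivAt (fun y : ℝ => (1 - |(k:ℝ)| / ((M:ℝ)+1)) * Real.cos ((k:ℝ)*y))
        ((-((1 - |(k:ℝ)| / ((M:ℝ)+1)) * (k:ℝ))) * Real.sin ((k:ℝ)*x)) x := by
    intro k _
    have h1 : HasDerivAt (fun y : ℝ => (k:ℝ)*y) (k:ℝ) x := by
      simpa using (hasDerivAt_id x).const_mul (k:ℝ)
    have h3 := (h1.cos).const_mul (1 - |(k:ℝ)| / ((M:ℝ)+1))
    exact h3.congr_deriv (by ring)
  exact HasDerivAt.fun_sum h

private lemma deriv_fejer (M : ℕ) (x : ℝ) :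
    deriv (fejer M) x
      = ∑ k ∈ Finset.Icc (-(M:ℤ)) (M:ℤ),
          (-((1 - |(k:ℝ)| / ((M:ℝ)+1)) * (k:ℝ))) * Real.sin ((k:ℝ)*x) :=
  (fejer_hasDerivAt M x).deriv

/-- Discrete orthogonality: sums of cosines at roots of unity. -/
private lemma sum_cos_orth (n : ℕ) (hn : 0 < n) (m : ℤ) :
    ∑ j ∈ Finset.range n, Real.cos (2*π*(m:ℝ)*(j:ℝ)/(n:ℝ))
      = if (n:ℤ) ∣ m then (n:ℝ) else 0 := by
  have hn' : (n:ℝ) ≠ 0 := by positivity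
  split_ifs with h
  · obtain ⟨t, rfl⟩ := h
    have : ∀ j ∈ Finset.range n, Real.cos (2*π*((((n:ℤ))*t : ℤ):ℝ)*(j:ℝ)/(n:ℝ)) = 1 := by
      intro j _
      have e : 2*π*((((n:ℤ))*t : ℤ):ℝ)*(j:ℝ)/(n:ℝ) = ((t*j : ℤ):ℝ) * (2*π) := by
        push_cast; field_simp
      rw [e, Real.cos_int_mul_two_pi]
    rw [Finset.sum_congr rfl this]
    simp
  · set θ : ℝ := 2*π*(m:ℝ)/(n:ℝ) with hθ
    set ζ : ℂ := Complex.exp ((θ:ℂ) * Complex.I) with hζ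
    have hζn : ζ ^ n = 1 := by
      rw [hζ, ← Complex.exp_nat_mul]
      have hnC : ((n:ℕ):ℂ) ≠ 0 := Nat.cast_ne_zero.mpr hn.ne'
      have e : (n:ℂ) * ((θ:ℂ) * Complex.I) = (m:ℂ) * (2*(π:ℂ) * Complex.I) := by
        rw [hθ]; push_cast
        rw [mul_comm, mul_assoc, mul_comm Complex.I, ← mul_assoc, div_mul_cancel₀ _ hnC]
        ring
      rw [e]
      exact_mod_cast Complex.exp_int_mul_two_pi_mul_I m
    have hζ1 : ζ ≠ 1 := by
      intro hc
      rw [hζ, Complex.exp_eq_one_iff] at hc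
      obtain ⟨t, ht⟩ := hc
      have ht' : (θ:ℂ) = (((t:ℝ)*(2*π) : ℝ):ℂ) := by
        apply mul_right_cancel₀ Complex.I_ne_zero
        rw [ht]; push_cast; ring
      have hθt : θ = (t:ℝ)*(2*π) := by exact_mod_cast ht'
      rw [hθ, div_eq_iff hn'] at hθt
      have h1 : (m:ℝ) = (n:ℝ) * (t:ℝ) := by
        have h2π : (2*π:ℝ) ≠ 0 := by positivity
        apply mul_left_cancel₀ h2π
        linear_combination hθt
      have hmnt : m = (n:ℤ) * t := by exact_mod_cast h1
      exact h ⟨t, hmnt⟩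
    have hgeom : ∑ j ∈ Finset.range n, ζ ^ j = 0 := by
      rw [geom_sum_eq hζ1, hζn]; simp
    have hre : ∀ j ∈ Finset.range n,
        Real.cos (2*π*(m:ℝ)*(j:ℝ)/(n:ℝ)) = (ζ ^ j).re := by
      intro j _
      rw [hζ, ← Complex.exp_nat_mul]
      have e : (j:ℂ) * ((θ:ℂ) * Complex.I) = (((j:ℝ)*θ : ℝ):ℂ) * Complex.I := by
        push_cast; ring
      rw [e, Complex.exp_ofReal_mul_I_re]
      congr 1
      rw [hθ]; ring
    rw [Finset.sum_congr rfl hre, ← Complex.re_sum, hgeom, Complex.zero_re]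

private lemma dvd_small (n : ℕ) (m : ℤ) (hm : |m| < (n:ℤ)) : ((n:ℤ) ∣ m) ↔ m = 0 := by
  constructor
  · intro h
    by_contra h0
    have h2 : (n:ℤ) ≤ |m| := Int.le_of_dvd (abs_pos.mpr h0) ((dvd_abs _ _).mpr h)
    omega
  · rintro rfl; exact dvd_zero _

/-- The exact value of the Riemann sum, when `2M < n`. -/
private lemma discrete_sum (Mn n : ℕ) (h2M : 2*Mn < n) (hn : 0 < n) :
    ∑ j ∈ Finset.range n, (deriv (fejer Mn) (2*π*(j:ℝ)/(n:ℝ)))^2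
      = (n:ℝ) * ∑ k ∈ Finset.Icc (-(Mn:ℤ)) (Mn:ℤ),
          (k:ℝ)^2 * (1 - |(k:ℝ)| / ((Mn:ℝ)+1))^2 := by
  set s := Finset.Icc (-(Mn:ℤ)) (Mn:ℤ) with hs
  set b : ℤ → ℝ := fun k => (-((1 - |(k:ℝ)| / ((Mn:ℝ)+1)) * (k:ℝ))) with hb
  have key : ∀ k ∈ s, ∀ l ∈ s,
      ∑ j ∈ Finset.range n, Real.sin ((k:ℝ)*(2*π*(j:ℝ)/(n:ℝ))) * Real.sin ((l:ℝ)*(2*π*(j:ℝ)/(n:ℝ)))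
        = ((if l = k then (n:ℝ) else 0) - (if l = -k then (n:ℝ) else 0))/2 := by
    intro k hk l hl
    simp only [hs, Finset.mem_Icc] at hk hl
    have e1 : ∀ j ∈ Finset.range n,
        Real.sin ((k:ℝ)*(2*π*(j:ℝ)/(n:ℝ))) * Real.sin ((l:ℝ)*(2*π*(j:ℝ)/(n:ℝ)))
          = (Real.cos (2*π*((k - l : ℤ):ℝ)*(j:ℝ)/(n:ℝ))
              - Real.cos (2*π*((k + l : ℤ):ℝ)*(j:ℝ)/(n:ℝ)))/2 := by
      intro j _
      have hc1 := Real.cos_sub ((k:ℝ)*(2*π*(j:ℝ)/(n:ℝ))) ((l:ℝ)*(2*π*(j:ℝ)/(n:ℝ)))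
      have hc2 := Real.cos_add ((k:ℝ)*(2*π*(j:ℝ)/(n:ℝ))) ((l:ℝ)*(2*π*(j:ℝ)/(n:ℝ)))
      have a1 : (k:ℝ)*(2*π*(j:ℝ)/(n:ℝ)) - (l:ℝ)*(2*π*(j:ℝ)/(n:ℝ))
          = 2*π*((k - l : ℤ):ℝ)*(j:ℝ)/(n:ℝ) := by push_cast; ring
      have a2 : (k:ℝ)*(2*π*(j:ℝ)/(n:ℝ)) + (l:ℝ)*(2*π*(j:ℝ)/(n:ℝ))
          = 2*π*((k + l : ℤ):ℝ)*(j:ℝ)/(n:ℝ) := by push_cast; ring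
      rw [a1] at hc1; rw [a2] at hc2
      linarith
    rw [Finset.sum_congr rfl e1, ← Finset.sum_div, Finset.sum_sub_distrib,
      sum_cos_orth n hn (k - l), sum_cos_orth n hn (k + l)]
    have d1 : ((n:ℤ) ∣ (k - l)) ↔ l = k := by
      rw [dvd_small n (k-l) (by rw [abs_lt]; omega)]; omega
    have d2 : ((n:ℤ) ∣ (k + l)) ↔ l = -k := by
      rw [dvd_small n (k+l) (by rw [abs_lt]; omega)]; omega
    rw [if_congr d1 rfl rfl, if_congr d2 rfl rfl]
  have hderiv : ∀ j ∈ Finset.range n,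
      (deriv (fejer Mn) (2*π*(j:ℝ)/(n:ℝ)))^2
        = ∑ k ∈ s, ∑ l ∈ s, (b k * Real.sin ((k:ℝ)*(2*π*(j:ℝ)/(n:ℝ))))
            * (b l * Real.sin ((l:ℝ)*(2*π*(j:ℝ)/(n:ℝ)))) := by
    intro j _
    rw [deriv_fejer, sq, Finset.sum_mul_sum]
  rw [Finset.sum_congr rfl hderiv]
  rw [Finset.sum_comm]
  have swap2 : ∀ k ∈ s, ∑ j ∈ Finset.range n, ∑ l ∈ s,
      (b k * Real.sin ((k:ℝ)*(2*π*(j:ℝ)/(n:ℝ)))) * (b l * Real.sin ((l:ℝ)*(2*π*(j:ℝ)/(n:ℝ))))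
      = (n:ℝ) * (b k)^2 := by
    intro k hk
    rw [Finset.sum_comm]
    have inner : ∀ l ∈ s, ∑ j ∈ Finset.range n,
        (b k * Real.sin ((k:ℝ)*(2*π*(j:ℝ)/(n:ℝ)))) * (b l * Real.sin ((l:ℝ)*(2*π*(j:ℝ)/(n:ℝ))))
        = b k * b l * (((if l = k then (n:ℝ) else 0) - (if l = -k then (n:ℝ) else 0))/2) := by
      intro l hl
      rw [← key k hk l hl, Finset.mul_sum]
      exact Finset.sum_congr rfl (fun j _ => by ring)
    rw [Finset.sum_congr rfl inner]
    have e : ∀ l ∈ s, b k * b l * (((if l = k then (n:ℝ) else 0) - (if l = -k then (n:ℝ) else 0))/2)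
        = (if l = k then b k * b l * ((n:ℝ)/2) else 0)
          - (if l = -k then b k * b l * ((n:ℝ)/2) else 0) := by
      intro l _
      split_ifs <;> ring
    rw [Finset.sum_congr rfl e, Finset.sum_sub_distrib,
      Finset.sum_ite_eq' s k _, Finset.sum_ite_eq' s (-k) _]
    have hks : k ∈ s := hk
    have hnks : -k ∈ s := by simp only [hs, Finset.mem_Icc] at hk ⊢; omega
    rw [if_pos hks, if_pos hnks]
    have hodd : b (-k) = - b k := by
      simp only [hb]; push_cast; rw [abs_neg]; ring
    rw [hodd]; ring
  rw [Finset.sum_congr rfl swap2, ← Finset.mul_sum]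
  congr 1
  refine Finset.sum_congr rfl (fun k _ => ?_)
  simp only [hb]; ring

/-- If `M_n²/n → a > 0`, then
`lim_{n→∞} (1/M_n³) (2π/n) ∑_{j=0}^{n−1} |F_{M_n}′(2πj/n)|² = (2/15)π`. -/
theorem fejer_deriv_sq_riemann_sum_limit (a : ℝ) (ha : 0 < a) (M : ℕ → ℕ)
    (hMpos : ∀ n, 0 < M n)
    (hM : Tendsto (fun n : ℕ => ((M n : ℝ)) ^ 2 / (n : ℝ)) atTop (𝓝 a)) :
    Tendsto (fun n : ℕ =>
        (1 / (M n : ℝ) ^ 3) * ((2 * π / n) *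
          ∑ j ∈ Finset.range n, |deriv (fejer (M n)) (2 * π * j / n)| ^ 2))
      atTop (𝓝 ((2 / 15) * π)) := by
  -- eventually (a/2) * n ≤ (M n)^2
  have hM2 : ∀ᶠ n : ℕ in atTop, (a/2) * (n:ℝ) ≤ ((M n : ℝ))^2 := by
    have h1 : ∀ᶠ n : ℕ in atTop, a/2 < ((M n : ℝ))^2 / (n:ℝ) :=
      hM.eventually (eventually_gt_nhds (by linarith))
    filter_upwards [h1, eventually_gt_atTop 0] with n h hn
    have hn' : (0:ℝ) < (n:ℝ) := by exact_mod_cast hn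
    rw [lt_div_iff₀ hn'] at h
    linarith
  -- M n → ∞
  have hMtopN : Tendsto M atTop atTop := by
    rw [tendsto_atTop]
    intro b
    have hb : ∀ᶠ n : ℕ in atTop, ((b:ℝ))^2 ≤ (a/2) * (n:ℝ) := by
      have h := (tendsto_natCast_atTop_atTop (R := ℝ)).const_mul_atTop
        (show (0:ℝ) < a/2 by linarith)
      exact h.eventually_ge_atTop _
    filter_upwards [hb, hM2] with n h1 h2
    have hbM : (b:ℝ) ≤ (M n : ℝ) := by
      nlinarith [(Nat.cast_nonneg b : (0:ℝ) ≤ (b:ℝ)), (Nat.cast_nonneg (M n) : (0:ℝ) ≤ ((M n):ℝ))]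
    exact_mod_cast hbM
  -- 2 * M n / n → 0
  have hinvM : Tendsto (fun n : ℕ => 1 / (M n : ℝ)) atTop (𝓝 0) :=
    tendsto_one_div_atTop_nhds_zero_nat.comp hMtopN
  have hratio : Tendsto (fun n : ℕ => 2 * (M n : ℝ) / (n:ℝ)) atTop (𝓝 0) := by
    have heq : ∀ n : ℕ, 2 * (M n : ℝ) / (n:ℝ)
        = 2 * (((M n : ℝ))^2 / (n:ℝ)) * (1 / (M n : ℝ)) := by
      intro n
      have hMn : (M n : ℝ) ≠ 0 := by
        have := hMpos n; positivity
      rcases eq_or_ne (n:ℝ) 0 with h | h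
      · simp [h]
      · field_simp
    have h := ((hM.const_mul 2).mul hinvM)
    simp only [mul_zero] at h
    exact Tendsto.congr (fun n => (heq n).symm) h
  have h2M : ∀ᶠ n : ℕ in atTop, 2 * M n < n := by
    have h1 : ∀ᶠ n : ℕ in atTop, 2 * (M n : ℝ) / (n:ℝ) < 1 :=
      hratio.eventually (eventually_lt_nhds one_pos)
    filter_upwards [h1, eventually_gt_atTop 0] with n h hn
    have hn' : (0:ℝ) < (n:ℝ) := by exact_mod_cast hn
    rw [div_lt_one hn'] at h
    exact_mod_cast h
  -- the limit function
  set g : ℕ → ℝ := fun m => (1/(m:ℝ)^3) *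
      (2*π * (((m:ℝ)+1)^3/15 - 1/(15*((m:ℝ)+1)))) with hgdef
  have hg : Tendsto g atTop (𝓝 ((2/15) * π)) := by
    have heq : g =ᶠ[atTop]
        (fun m : ℕ => (2/15*π) * ((1 + 1/(m:ℝ))^3 - 1/(((m:ℝ)+1)*(m:ℝ)^3))) := by
      filter_upwards [eventually_gt_atTop 0] with m hm
      have hm0 : (m:ℝ) ≠ 0 := by positivity
      have hm1 : (m:ℝ)+1 ≠ 0 := by positivity
      simp only [hgdef]
      field_simp
    have hA : Tendsto (fun m : ℕ => (1 + 1/(m:ℝ))^3) atTop (𝓝 1) := by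
      have := (tendsto_const_nhds (x := (1:ℝ)) (f := atTop)).add
        tendsto_one_div_atTop_nhds_zero_nat
      have h3 := this.pow 3
      norm_num at h3
      simpa [one_div] using h3
    have hB : Tendsto (fun m : ℕ => 1/(((m:ℝ)+1)*(m:ℝ)^3)) atTop (𝓝 0) := by
      apply squeeze_zero' (g := fun m : ℕ => 1/(m:ℝ))
      · filter_upwards [eventually_gt_atTop 0] with m hm
        have : (0:ℝ) < (m:ℝ) := by exact_mod_cast hm
        positivity
      · filter_upwards [eventually_ge_atTop 1] with m hm
        have hm' : (1:ℝ) ≤ (m:ℝ) := by exact_mod_cast hm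
        apply one_div_le_one_div_of_le (by linarith)
        have hx1 : (m:ℝ) ≤ (m:ℝ)^3 := by
          nlinarith [mul_nonneg (mul_nonneg (by linarith : (0:ℝ) ≤ (m:ℝ))
            (by linarith : (0:ℝ) ≤ (m:ℝ)-1)) (by linarith : (0:ℝ) ≤ (m:ℝ)+1)]
        have hx2 : (m:ℝ)^3 ≤ ((m:ℝ)+1)*(m:ℝ)^3 := by
          nlinarith [pow_nonneg (by linarith : (0:ℝ) ≤ (m:ℝ)) 4]
        linarith
      · exact tendsto_one_div_atTop_nhds_zero_nat
    have hlim := (hA.sub hB).const_mul (2/15*π)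
    rw [sub_zero, mul_one] at hlim
    exact Tendsto.congr' heq.symm (by convert hlim using 2)
  have hcomp : Tendsto (fun n => g (M n)) atTop (𝓝 ((2/15) * π)) := hg.comp hMtopN
  apply hcomp.congr'
  filter_upwards [h2M, eventually_gt_atTop 0] with n h2 hn
  have hn' : (n:ℝ) ≠ 0 := by positivity
  have habs : ∀ j ∈ Finset.range n, |deriv (fejer (M n)) (2 * π * (j:ℝ) / (n:ℝ))| ^ 2
      = (deriv (fejer (M n)) (2 * π * (j:ℝ) / (n:ℝ)))^2 := fun j _ => sq_abs _
  rw [hgdef]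
  simp only
  rw [Finset.sum_congr rfl habs, discrete_sum (M n) n h2 hn, S_eval (M n)]
  have hX : ∀ X : ℝ, (2*π/(n:ℝ)) * ((n:ℝ) * X) = 2*π*X := by
    intro X; field_simp
  rw [hX]
end
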